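/- arXiv:2601.03898 — 5 statements merged into one kernel-verified Lean document; each statement's English description precedes it below -/
import Mathlib

section
/- Let G be a place graph obtained as the composition G = A ∘ B, where A: k → n and B: m → k are place graphs sharing no entities, and the parent map of G agrees with that of B on V_B (with children of B's regions attached per composition) and with that of A on V_A. Then any descendant of an entity of B is itself an entity of B; that is, if u ∈ V_B, v ∈ V_G, and u is in the transitive closure of the parent map applied to v (u = prnt_G^+(v)), then v ∈ V_B. -/
/-- A concrete place graph `B : m → n` with entity set `V`, `m` sites, `n` regions,
a parent map on entities (`prntE`) and on sites (`prntS`). -/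
structure PlaceGraph (α : Type) where
  V : Finset α
  m : ℕ
  n : ℕ
  prntE : α → α ⊕ ℕ
  prntS : ℕ → α ⊕ ℕ

namespace PlaceGraph

/-- Well-formedness: parents of entities/sites are entities of the graph or regions `< n`. -/
def WF {α : Type} (G : PlaceGraph α) : Prop :=
  (∀ v ∈ G.V, (∀ u, G.prntE v = .inl u → u ∈ G.V) ∧ (∀ j, G.prntE v = .inr j → j < G.n)) ∧
  (∀ s, s < G.m → (∀ u, G.prntS s = .inl u → u ∈ G.V) ∧ (∀ j, G.prntS s = .inr j → j < G.n))

/-- Composition `A ∘ B` of place graphs `A : k → n` and `B : m → k`: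
`B`'s regions are identified with `A`'s sites. -/
def comp {α : Type} [DecidableEq α] (A B : PlaceGraph α) : PlaceGraph α where
  V := A.V ∪ B.V
  m := B.m
  n := A.n
  prntE := fun v =>
    if v ∈ B.V then
      match B.prntE v with
      | .inl u => .inl u
      | .inr j => A.prntS j
    else A.prntE v
  prntS := fun s =>
    match B.prntS s with
    | .inl u => .inl u
    | .inr j => A.prntS j

/-- `step G v u`: the entity `u` is the parent of the entity `v` in `G`. -/
def step {α : Type} (G : PlaceGraph α) (v u : α) : Prop :=
  v ∈ G.V ∧ u ∈ G.V ∧ G.prntE v = .inl u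

/-- `Anc G u v`: the entity `u` is a (strict) ancestor of the entity `v` in `G`,
i.e. `u ∈ prnt_G⁺(v)`. -/
def Anc {α : Type} (G : PlaceGraph α) (u v : α) : Prop :=
  Relation.TransGen (step G) v u

end PlaceGraph

namespace PlaceGraph

variable {α : Type}

theorem WF.mem_of_prntE_eq_inl {G : PlaceGraph α} (hG : G.WF) {v u : α} (hv : v ∈ G.V)
    (h : G.prntE v = .inl u) : u ∈ G.V :=
  (hG.1 v hv).1 u h

theorem comp_prntE_of_not_mem [DecidableEq α] (A B : PlaceGraph α) {v : α} (hv : v ∉ B.V) :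
    (A.comp B).prntE v = A.prntE v :=
  if_neg hv

/-- An entity of `A` has its parent in `A`, which is disjoint from `B`. -/
theorem mem_inner_of_step_comp [DecidableEq α] {A B : PlaceGraph α} (hWA : A.WF)
    (hdisj : Disjoint A.V B.V) {x y : α} (hstep : (A.comp B).step x y) (hy : y ∈ B.V) :
    x ∈ B.V := by
  by_contra hx
  have hxA : x ∈ A.V := (Finset.mem_union.mp hstep.1).resolve_right hx
  have hpx : A.prntE x = .inl y := comp_prntE_of_not_mem A B hx ▸ hstep.2.2
  exact Finset.disjoint_left.mp hdisj (hWA.mem_of_prntE_eq_inl hxA hpx) hy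

end PlaceGraph

theorem descendant_of_inner_entity_mem_inner_general {α : Type} [DecidableEq α]
    (A B : PlaceGraph α) (hWA : A.WF)
    (hdisj : Disjoint A.V B.V)
    (u v : α) (hu : u ∈ B.V)
    (hanc : PlaceGraph.Anc (A.comp B) u v) :
    v ∈ B.V :=
  Relation.TransGen.closed' (r := (A.comp B).step)
    (PlaceGraph.mem_inner_of_step_comp hWA hdisj) hanc hu

/-- In a composition `G = A ∘ B` of place graphs `A : k → n` and
`B : m → k` (sharing no entities), any descendant of an entity of `B` is itself an
entity of `B`: if `u ∈ V_B`, `v ∈ V_G` and `u ∈ prnt_G⁺(v)`, then `v ∈ V_B`. -/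
theorem descendant_of_inner_entity_mem_inner {α : Type} [DecidableEq α]
    (A B : PlaceGraph α) (hWA : A.WF) (hWB : B.WF)
    (hIface : B.n = A.m) (hdisj : Disjoint A.V B.V)
    (u v : α) (hu : u ∈ B.V) (hv : v ∈ (A.comp B).V)
    (hanc : PlaceGraph.Anc (A.comp B) u v) :
    v ∈ B.V :=
  descendant_of_inner_entity_mem_inner_general A B hWA hdisj u v hu hanc
end

section
/- Let G = A ∘ B ∘ C be a triple composition of place graphs A: k → n, B: l → k, C: m → l. If u, v ∈ V_B and w ∈ V_G with w an ancestor of u and a descendant of v under the transitive closure of the parent map of G (i.e., w = prnt_G^+(u) and v = prnt_G^+(w)), then w ∈ V_B. In particular, any entity lying strictly between two entities of B in the ancestry order must itself belong to B. -/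
/-! Composition is associative, so `G = (A ∘ B) ∘ C = A ∘ (B ∘ C)`. Parents of entities of the
outer factor of a composition stay in that factor, and children of entities of the inner factor
stay in that factor. Hence an entity between two entities of `B` lies in both `A ∘ B` and
`B ∘ C`, i.e. in `V_B`, as `A` and `C` are disjoint. -/

namespace PlaceGraph

variable {α : Type} [DecidableEq α]

theorem comp_prntE_of_notMem (A B : PlaceGraph α) {v : α} (hv : v ∉ B.V) :
    (A.comp B).prntE v = A.prntE v := by
  simp [comp, hv]

theorem comp_prntE_of_prntE_eq_inl (A B : PlaceGraph α) {v u : α} (hv : v ∈ B.V)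
    (hu : B.prntE v = .inl u) : (A.comp B).prntE v = .inl u := by
  simp [comp, hv, hu]

theorem comp_prntE_of_prntE_eq_inr (A B : PlaceGraph α) {v : α} {j : ℕ} (hv : v ∈ B.V)
    (hj : B.prntE v = .inr j) : (A.comp B).prntE v = A.prntS j := by
  simp [comp, hv, hj]

theorem comp_prntS_of_prntS_eq_inl (A B : PlaceGraph α) {s : ℕ} {u : α}
    (hu : B.prntS s = .inl u) : (A.comp B).prntS s = .inl u := by
  simp [comp, hu]

theorem comp_prntS_of_prntS_eq_inr (A B : PlaceGraph α) {s j : ℕ}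
    (hj : B.prntS s = .inr j) : (A.comp B).prntS s = A.prntS j := by
  simp [comp, hj]

theorem comp_assoc (A B C : PlaceGraph α) : A.comp (B.comp C) = (A.comp B).comp C := by
  simp only [comp, Finset.union_assoc, mk.injEq, true_and]
  constructor
  · funext v
    by_cases hC : v ∈ C.V
    · rcases C.prntE v with u | j <;> simp [hC]
    · by_cases hB : v ∈ B.V <;> simp [hB, hC]
  · funext s
    rcases C.prntS s with u | j <;> simp

theorem WF.comp {A B : PlaceGraph α} (hA : A.WF) (hB : B.WF) (hBA : B.n = A.m) :
    (A.comp B).WF := by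
  have hsite : ∀ j, j < B.n → (∀ u, A.prntS j = .inl u → u ∈ (A.comp B).V) ∧
      (∀ i, A.prntS j = .inr i → i < (A.comp B).n) := fun j hj =>
    ⟨fun u hu => Finset.mem_union_left _ ((hA.2 j (hBA ▸ hj)).1 u hu), (hA.2 j (hBA ▸ hj)).2⟩
  have hinner : ∀ u ∈ B.V, ∀ u', Sum.inl (β := ℕ) u = .inl u' → u' ∈ (A.comp B).V :=
    fun _ hu _ hu' => Finset.mem_union_right _ (Sum.inl_injective hu' ▸ hu)
  refine ⟨fun v hv => ?_, fun s hs => ?_⟩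
  · by_cases hvB : v ∈ B.V
    · rcases hprnt : B.prntE v with u | j
      · rw [comp_prntE_of_prntE_eq_inl A B hvB hprnt]
        exact ⟨hinner u ((hB.1 v hvB).1 u hprnt), nofun⟩
      · rw [comp_prntE_of_prntE_eq_inr A B hvB hprnt]
        exact hsite j ((hB.1 v hvB).2 j hprnt)
    · have hvA : v ∈ A.V := (Finset.mem_union.1 hv).resolve_right hvB
      rw [comp_prntE_of_notMem A B hvB]
      exact ⟨fun u hu => Finset.mem_union_left _ ((hA.1 v hvA).1 u hu), (hA.1 v hvA).2⟩
  · rcases hprnt : B.prntS s with u | j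
    · rw [comp_prntS_of_prntS_eq_inl A B hprnt]
      exact ⟨hinner u ((hB.2 s hs).1 u hprnt), nofun⟩
    · rw [comp_prntS_of_prntS_eq_inr A B hprnt]
      exact hsite j ((hB.2 s hs).2 j hprnt)

theorem step_comp_mem_outer {E C : PlaceGraph α} (hE : E.WF) (hEC : Disjoint E.V C.V)
    {x y : α} (hxy : (E.comp C).step x y) (hx : x ∈ E.V) : y ∈ E.V := by
  have hxC : x ∉ C.V := Finset.disjoint_left.1 hEC hx
  exact (hE.1 x hx).1 y ((comp_prntE_of_notMem E C hxC).symm.trans hxy.2.2)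

theorem step_comp_mem_inner {A D : PlaceGraph α} (hA : A.WF) (hAD : Disjoint A.V D.V)
    {x y : α} (hxy : (A.comp D).step x y) (hy : y ∈ D.V) : x ∈ D.V := by
  by_contra hxD
  have hxA : x ∈ A.V := (Finset.mem_union.1 hxy.1).resolve_right hxD
  have hyA : y ∈ A.V := (hA.1 x hxA).1 y ((comp_prntE_of_notMem A D hxD).symm.trans hxy.2.2)
  exact Finset.disjoint_left.1 hAD hyA hy

theorem Anc.mem_outer_of_comp {E C : PlaceGraph α} (hE : E.WF) (hEC : Disjoint E.V C.V)
    {u v : α} (h : (E.comp C).Anc u v) (hv : v ∈ E.V) : u ∈ E.V :=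
  (Relation.transGen_swap.2 h).closed' (P := (· ∈ E.V)) (step_comp_mem_outer hE hEC) hv

theorem Anc.mem_inner_of_comp {A D : PlaceGraph α} (hA : A.WF) (hAD : Disjoint A.V D.V)
    {u v : α} (h : (A.comp D).Anc u v) (hu : u ∈ D.V) : v ∈ D.V :=
  h.closed' (P := (· ∈ D.V)) (step_comp_mem_inner hA hAD) hu

end PlaceGraph

theorem between_inner_entities_mem_middle_general {α : Type} [DecidableEq α]
    (A B C : PlaceGraph α) (hWA : A.WF) (hWB : B.WF)
    (hIfaceAB : B.n = A.m)
    (hAB : Disjoint A.V B.V) (hAC : Disjoint A.V C.V) (hBC : Disjoint B.V C.V)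
    (u v w : α) (hu : u ∈ B.V) (hv : v ∈ B.V)
    (h₁ : PlaceGraph.Anc (A.comp (B.comp C)) w u)
    (h₂ : PlaceGraph.Anc (A.comp (B.comp C)) v w) :
    w ∈ B.V := by
  have hwAB : w ∈ A.V ∪ B.V := by
    rw [PlaceGraph.comp_assoc] at h₁
    exact h₁.mem_outer_of_comp (hWA.comp hWB hIfaceAB) (Finset.disjoint_union_left.2 ⟨hAC, hBC⟩)
      (Finset.mem_union_right _ hu)
  have hwBC : w ∈ B.V ∪ C.V :=
    h₂.mem_inner_of_comp hWA (Finset.disjoint_union_right.2 ⟨hAB, hAC⟩)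
      (Finset.mem_union_left _ hv)
  rcases Finset.mem_union.1 hwAB with hwA | hwB
  · exact (Finset.mem_union.1 hwBC).resolve_right (Finset.disjoint_left.1 hAC hwA)
  · exact hwB

/-- In a triple composition `G = A ∘ B ∘ C` of place graphs
`A : k → n`, `B : l → k`, `C : m → l`, if `u, v ∈ V_B` and `w ∈ V_G` is an ancestor of
`u` and a descendant of `v` (i.e. `w ∈ prnt_G⁺(u)` and `v ∈ prnt_G⁺(w)`), then `w ∈ V_B`. -/
theorem between_inner_entities_mem_middle {α : Type} [DecidableEq α]
    (A B C : PlaceGraph α) (hWA : A.WF) (hWB : B.WF) (hWC : C.WF)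
    (hIfaceAB : B.n = A.m) (hIfaceBC : C.n = B.m)
    (hAB : Disjoint A.V B.V) (hAC : Disjoint A.V C.V) (hBC : Disjoint B.V C.V)
    (u v w : α) (hu : u ∈ B.V) (hv : v ∈ B.V) (hw : w ∈ (A.comp (B.comp C)).V)
    (h₁ : PlaceGraph.Anc (A.comp (B.comp C)) w u)
    (h₂ : PlaceGraph.Anc (A.comp (B.comp C)) v w) :
    w ∈ B.V :=
  between_inner_entities_mem_middle_general A B C hWA hWB hIfaceAB hAB hAC hBC u v w hu hv h₁ h₂
end

section
/- Composition of place graphs preserves acyclicity: if A: k → n and B: m → k are place graphs with acyclic parent maps and disjoint entity sets, then the composed parent map prnt_{A∘B} on m ⊎ V_A ⊎ V_B → V_A ⊎ V_B ⊎ n is acyclic, i.e., no entity v satisfies (v, v) ∈ prnt⁺_{A∘B}. -/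
/-- Composition of place graphs preserves acyclicity: if `A : k → n`
and `B : m → k` have acyclic parent maps and disjoint entity sets, then the composed
parent map of `A ∘ B` is acyclic, i.e. no entity `v` satisfies `(v, v) ∈ prnt⁺_{A∘B}`. -/
theorem comp_acyclic {α : Type} [DecidableEq α]
    (A B : PlaceGraph α) (hWA : A.WF) (hWB : B.WF)
    (hIface : B.n = A.m) (hdisj : Disjoint A.V B.V)
    (hacA : ∀ v : α, ¬ PlaceGraph.Anc A v v)
    (hacB : ∀ v : α, ¬ PlaceGraph.Anc B v v) :
    ∀ v : α, ¬ PlaceGraph.Anc (A.comp B) v v := by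
  classical
  have hnotB : ∀ v ∈ A.V, v ∉ B.V := fun v hv hvB =>
    (Finset.disjoint_left.mp hdisj hv) hvB
  -- step in composite from an A-vertex is an A-step
  have stepA : ∀ v u, PlaceGraph.step (A.comp B) v u → v ∈ A.V → PlaceGraph.step A v u := by
    intro v u ⟨hv, hu, hp⟩ hvA
    simp only [PlaceGraph.comp, if_neg (hnotB v hvA)] at hp
    exact ⟨hvA, ((hWA.1 v hvA).1 u hp), hp⟩
  -- step in composite from a B-vertex: either a B-step or lands in A.V
  have stepB : ∀ v u, PlaceGraph.step (A.comp B) v u → v ∈ B.V →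
      PlaceGraph.step B v u ∨ u ∈ A.V := by
    intro v u ⟨hv, hu, hp⟩ hvB
    simp only [PlaceGraph.comp, if_pos hvB] at hp
    cases hBp : B.prntE v with
    | inl w =>
      rw [hBp] at hp
      simp only at hp
      obtain rfl : w = u := Sum.inl.inj hp
      exact Or.inl ⟨hvB, (hWB.1 v hvB).1 w hBp, hBp⟩
    | inr j =>
      rw [hBp] at hp
      simp only at hp
      have hj : j < A.m := hIface ▸ (hWB.1 v hvB).2 j hBp
      exact Or.inr ((hWA.2 j hj).1 u hp)
  -- transfer: a composite path starting in A.V is an A-path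
  have transA : ∀ v u, Relation.TransGen (PlaceGraph.step (A.comp B)) v u →
      v ∈ A.V → Relation.TransGen (PlaceGraph.step A) v u := by
    intro v u h
    induction h with
    | single hs => exact fun hvA => Relation.TransGen.single (stepA _ _ hs hvA)
    | @tail b c _ hs ih =>
      intro hvA
      have hA := ih hvA
      have hbA : b ∈ A.V := by
        rcases hA with h | ⟨_, h⟩
        · exact h.2.1
        · exact h.2.1
      exact hA.tail (stepA _ _ hs hbA)
  -- transfer: a composite path from B.V to B.V is a B-path
  have transB : ∀ v u, Relation.TransGen (PlaceGraph.step (A.comp B)) v u →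
      v ∈ B.V → u ∈ B.V → Relation.TransGen (PlaceGraph.step B) v u := by
    intro v u h
    induction h with
    | single hs =>
      intro hvB huB
      rcases stepB _ _ hs hvB with h | h
      · exact Relation.TransGen.single h
      · exact absurd huB (hnotB _ h)
    | @tail b c _ hs ih =>
      intro hvB hcB
      by_cases hbA : b ∈ A.V
      · have := (stepA _ _ hs hbA).2.1
        exact absurd hcB (hnotB _ this)
      · have hbB : b ∈ B.V := by
          rcases Finset.mem_union.mp hs.1 with h | h
          · exact absurd h hbA
          · exact h
        rcases stepB _ _ hs hbB with h | h
        · exact (ih hvB hbB).tail h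
        · exact absurd hcB (hnotB _ h)
  intro v hcyc
  unfold PlaceGraph.Anc at hcyc
  have hvV : v ∈ (A.comp B).V := by
    rcases hcyc with h | ⟨_, h⟩
    · exact h.1
    · exact h.2.1
  rcases Finset.mem_union.mp hvV with hvA | hvB
  · exact hacA v (transA v v hcyc hvA)
  · exact hacB v (transB v v hcyc hvB hvB)
end

section
/- The McSplit upper bound is sound for labelled graphs: let M be a partial injective vertex mapping between finite vertex-labelled graphs G₁ and G₂, and partition the unmatched vertices of G₁ and G₂ into label classes, where two unmatched vertices u ∈ V₁ and v ∈ V₂ belong to the same label class iff they have the same label and, for every matched pair (a,b) ∈ M, u is adjacent to a exactly when v is adjacent to b. Then every extension of M to a larger common induced subgraph mapping has size at most |M| + Σ over label classes l of min(number of unmatched G₁-vertices in l, number of unmatched G₂-vertices in l). -/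
/-- `M` is a common induced (label-preserving) subgraph mapping between vertex-labelled
graphs `G₁` and `G₂`: a set of pairs that is injective in both coordinates (a partial
injective function), preserves labels, and preserves and reflects adjacency. -/
def IsCISMap {α β : Type} (G₁ : SimpleGraph α) (G₂ : SimpleGraph β)
    (L₁ : α → ℕ) (L₂ : β → ℕ) (M : Finset (α × β)) : Prop :=
  (∀ p ∈ M, ∀ q ∈ M, (p.1 = q.1 ↔ p.2 = q.2)) ∧
  (∀ p ∈ M, L₁ p.1 = L₂ p.2) ∧
  (∀ p ∈ M, ∀ q ∈ M, (G₁.Adj p.1 q.1 ↔ G₂.Adj p.2 q.2))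

/-- The McSplit label-class *signature* of an unmatched vertex `u` of `G₁` with respect
to the partial mapping `M`: its label together with its adjacency pattern to the
matched pairs. Two unmatched vertices `u ∈ V₁` and `v ∈ V₂` lie in the same label
class iff their signatures coincide. -/
def sigA {α β : Type} [DecidableEq α] [DecidableEq β]
    (G₁ : SimpleGraph α) [DecidableRel G₁.Adj] (L₁ : α → ℕ)
    (M : Finset (α × β)) (u : α) : ℕ × (α × β → Bool) :=
  (L₁ u, fun p => decide (p ∈ M ∧ G₁.Adj u p.1))

/-- The signature of an unmatched vertex `v` of `G₂` with respect to `M`. -/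
def sigB {α β : Type} [DecidableEq α] [DecidableEq β]
    (G₂ : SimpleGraph β) [DecidableRel G₂.Adj] (L₂ : β → ℕ)
    (M : Finset (α × β)) (v : β) : ℕ × (α × β → Bool) :=
  (L₂ v, fun p => decide (p ∈ M ∧ G₂.Adj v p.2))

/-- The McSplit upper bound for the partial mapping `M`:
`|M| + Σ over label classes l of min(|l ∩ V₁|, |l ∩ V₂|)`, where the label classes
partition the unmatched vertices by signature. -/
def mcsplitBound {α β : Type} [Fintype α] [Fintype β] [DecidableEq α] [DecidableEq β]
    (G₁ : SimpleGraph α) (G₂ : SimpleGraph β)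
    [DecidableRel G₁.Adj] [DecidableRel G₂.Adj]
    (L₁ : α → ℕ) (L₂ : β → ℕ) (M : Finset (α × β)) : ℕ :=
  M.card +
    ∑ s ∈ ((Finset.univ.filter fun u : α => ∀ p ∈ M, p.1 ≠ u).image (sigA G₁ L₁ M)
          ∪ (Finset.univ.filter fun v : β => ∀ p ∈ M, p.2 ≠ v).image (sigB G₂ L₂ M)),
      min ((Finset.univ.filter fun u : α =>
              (∀ p ∈ M, p.1 ≠ u) ∧ sigA G₁ L₁ M u = s).card)
          ((Finset.univ.filter fun v : β =>
              (∀ p ∈ M, p.2 ≠ v) ∧ sigB G₂ L₂ M v = s).card)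

/-!
A pair `(u, v)` added to `M` has `u` and `v` unmatched and, since the extension preserves
labels and adjacency to the pairs of `M`, of the same signature. The new pairs thus form a
matching between unmatched vertices that stays inside the label classes, and a matching
uses at most `min(|l ∩ V₁|, |l ∩ V₂|)` pairs inside a class `l`.
-/

open Finset

section Matching

variable {α β σ : Type*} [DecidableEq σ] {D : Finset (α × β)} {A : Finset α} {B : Finset β}
  {f : α → σ} {g : β → σ}

theorem card_filter_le_min_of_injective_pairs
    (hD : ∀ p ∈ D, ∀ q ∈ D, (p.1 = q.1 ↔ p.2 = q.2))
    (hA : ∀ p ∈ D, p.1 ∈ A) (hB : ∀ p ∈ D, p.2 ∈ B) (hfg : ∀ p ∈ D, f p.1 = g p.2) (s : σ) :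
    #{p ∈ D | f p.1 = s} ≤ min #{u ∈ A | f u = s} #{v ∈ B | g v = s} := by
  refine le_min (card_le_card_of_injOn Prod.fst ?_ ?_) (card_le_card_of_injOn Prod.snd ?_ ?_)
  · intro p hp
    rw [mem_coe, mem_filter] at hp ⊢
    exact ⟨hA p hp.1, hp.2⟩
  · intro p hp q hq h
    exact Prod.ext h ((hD p (mem_filter.1 hp).1 q (mem_filter.1 hq).1).1 h)
  · intro p hp
    rw [mem_coe, mem_filter] at hp ⊢
    exact ⟨hB p hp.1, hfg p hp.1 ▸ hp.2⟩
  · intro p hp q hq h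
    exact Prod.ext ((hD p (mem_filter.1 hp).1 q (mem_filter.1 hq).1).2 h) h

theorem card_le_sum_min_of_injective_pairs
    (hD : ∀ p ∈ D, ∀ q ∈ D, (p.1 = q.1 ↔ p.2 = q.2))
    (hA : ∀ p ∈ D, p.1 ∈ A) (hB : ∀ p ∈ D, p.2 ∈ B) (hfg : ∀ p ∈ D, f p.1 = g p.2) :
    #D ≤ ∑ s ∈ A.image f ∪ B.image g, min #{u ∈ A | f u = s} #{v ∈ B | g v = s} := by
  have himage : D.image (f ∘ Prod.fst) ⊆ A.image f ∪ B.image g := by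
    intro s hs
    obtain ⟨p, hp, rfl⟩ := mem_image.1 hs
    exact mem_union_left _ (mem_image_of_mem f (hA p hp))
  calc #D = ∑ s ∈ D.image (f ∘ Prod.fst), #{p ∈ D | f p.1 = s} := card_eq_sum_card_image _ D
    _ ≤ ∑ s ∈ D.image (f ∘ Prod.fst), min #{u ∈ A | f u = s} #{v ∈ B | g v = s} :=
      sum_le_sum fun s _ => card_filter_le_min_of_injective_pairs hD hA hB hfg s
    _ ≤ _ := sum_le_sum_of_subset himage

end Matching

section Extension

variable {α β : Type} {G₁ : SimpleGraph α} {G₂ : SimpleGraph β} {L₁ : α → ℕ} {L₂ : β → ℕ}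
  {M M' : Finset (α × β)}

theorem IsCISMap.fst_ne_of_notMem (hM' : IsCISMap G₁ G₂ L₁ L₂ M') (hMM' : M ⊆ M')
    {p q : α × β} (hpM' : p ∈ M') (hpM : p ∉ M) (hq : q ∈ M) : q.1 ≠ p.1 :=
  fun h => hpM (Prod.ext h.symm ((hM'.1 q (hMM' hq) p hpM').1 h).symm ▸ hq)

theorem IsCISMap.snd_ne_of_notMem (hM' : IsCISMap G₁ G₂ L₁ L₂ M') (hMM' : M ⊆ M')
    {p q : α × β} (hpM' : p ∈ M') (hpM : p ∉ M) (hq : q ∈ M) : q.2 ≠ p.2 :=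
  fun h => hpM (Prod.ext ((hM'.1 q (hMM' hq) p hpM').2 h).symm h.symm ▸ hq)

theorem IsCISMap.sigA_eq_sigB [DecidableEq α] [DecidableEq β]
    [DecidableRel G₁.Adj] [DecidableRel G₂.Adj]
    (hM' : IsCISMap G₁ G₂ L₁ L₂ M') (hMM' : M ⊆ M') {p : α × β} (hp : p ∈ M') :
    sigA G₁ L₁ M p.1 = sigB G₂ L₂ M p.2 := by
  refine Prod.ext (hM'.2.1 p hp) (funext fun q => ?_)
  simp only [sigA, sigB, decide_eq_decide]
  exact and_congr_right fun hq => hM'.2.2 p hp q (hMM' hq)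

end Extension

theorem mcsplit_bound_sound_general {α β : Type} [Fintype α] [Fintype β]
    [DecidableEq α] [DecidableEq β]
    (G₁ : SimpleGraph α) (G₂ : SimpleGraph β)
    [DecidableRel G₁.Adj] [DecidableRel G₂.Adj]
    (L₁ : α → ℕ) (L₂ : β → ℕ)
    (M : Finset (α × β)) :
    ∀ M' : Finset (α × β), IsCISMap G₁ G₂ L₁ L₂ M' → M ⊆ M' →
      M'.card ≤ mcsplitBound G₁ G₂ L₁ L₂ M := by
  intro M' hM' hMM'
  have hnew := card_le_sum_min_of_injective_pairs (D := M' \ M)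
    (A := {u | ∀ p ∈ M, p.1 ≠ u}) (B := {v | ∀ p ∈ M, p.2 ≠ v})
    (f := sigA G₁ L₁ M) (g := sigB G₂ L₂ M)
    (fun p hp q hq => hM'.1 p (mem_sdiff.1 hp).1 q (mem_sdiff.1 hq).1)
    (fun p hp => mem_filter.2 ⟨mem_univ _, fun _ hq =>
      hM'.fst_ne_of_notMem hMM' (mem_sdiff.1 hp).1 (mem_sdiff.1 hp).2 hq⟩)
    (fun p hp => mem_filter.2 ⟨mem_univ _, fun _ hq =>
      hM'.snd_ne_of_notMem hMM' (mem_sdiff.1 hp).1 (mem_sdiff.1 hp).2 hq⟩)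
    (fun p hp => hM'.sigA_eq_sigB hMM' (mem_sdiff.1 hp).1)
  simp only [filter_filter] at hnew
  rw [mcsplitBound, ← card_sdiff_add_card_eq_card hMM']
  omega

/-- The McSplit upper bound is sound for labelled graphs: every
extension of a partial common induced subgraph mapping `M` to a larger common induced
subgraph mapping has size at most
`|M| + Σ over label classes l of min(|l ∩ V₁|, |l ∩ V₂|)`. -/
theorem mcsplit_bound_sound {α β : Type} [Fintype α] [Fintype β]
    [DecidableEq α] [DecidableEq β]
    (G₁ : SimpleGraph α) (G₂ : SimpleGraph β)
    [DecidableRel G₁.Adj] [DecidableRel G₂.Adj]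
    (L₁ : α → ℕ) (L₂ : β → ℕ)
    (M : Finset (α × β)) (hM : IsCISMap G₁ G₂ L₁ L₂ M) :
    ∀ M' : Finset (α × β), IsCISMap G₁ G₂ L₁ L₂ M' → M ⊆ M' →
      M'.card ≤ mcsplitBound G₁ G₂ L₁ L₂ M :=
  mcsplit_bound_sound_general G₁ G₂ L₁ L₂ M
end

section
/- McSplit-style bound refinement under label-class partitioning: let G₁, G₂ be finite labelled graphs, M a partial common induced subgraph mapping, and extend M by one pair (a, b) in the same label class. Then each label class l of M splits into at most two label classes of M ∪ {(a,b)} (vertices adjacent to a resp. b, and vertices not adjacent), and the bound |M∪{(a,b)}| + Σ_l' min(|l' ∩ V₁|, |l' ∩ V₂|) over the refined classes is at most 1 + the bound |M| + Σ_l min(|l ∩ V₁|, |l ∩ V₂|) over the original classes. -/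
open Finset

section ClassMinSum

variable {α β K K' : Type*} [Fintype α] [Fintype β] [DecidableEq K] [DecidableEq K']

def classMinSum (P : α → Prop) (Q : β → Prop) [DecidablePred P] [DecidablePred Q]
    (f : α → K) (g : β → K) : ℕ :=
  ∑ s ∈ (univ.filter P).image f ∪ (univ.filter Q).image g,
    min (univ.filter fun u => P u ∧ f u = s).card (univ.filter fun v => Q v ∧ g v = s).card

lemma sum_card_fiber_le_card_fiber {P P' : α → Prop} [DecidablePred P] [DecidablePred P']
    {f : α → K} {f' : α → K'} (π : K' → K) (hP : ∀ u, P' u → P u) (hf : ∀ u, π (f' u) = f u)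
    (T : Finset K') (s : K) :
    ∑ s' ∈ T with π s' = s, (univ.filter fun u => P' u ∧ f' u = s').card ≤
      (univ.filter fun u => P u ∧ f u = s).card := by
  classical
  rw [← card_biUnion]
  · refine card_le_card fun u hu => ?_
    simp only [mem_biUnion, mem_filter, mem_univ, true_and] at hu ⊢
    obtain ⟨s', ⟨-, rfl⟩, hu, rfl⟩ := hu
    exact ⟨hP u hu, (hf u).symm⟩
  · intro s₁ _ s₂ _ hne
    refine disjoint_left.2 fun u h₁ h₂ => hne ?_
    simp only [mem_filter] at h₁ h₂
    exact h₁.2.2.symm.trans h₂.2.2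

lemma classMinSum_le_of_factor {P P' : α → Prop} {Q Q' : β → Prop}
    [DecidablePred P] [DecidablePred P'] [DecidablePred Q] [DecidablePred Q']
    {f : α → K} {g : β → K} {f' : α → K'} {g' : β → K'} (π : K' → K)
    (hP : ∀ u, P' u → P u) (hQ : ∀ v, Q' v → Q v)
    (hf : ∀ u, π (f' u) = f u) (hg : ∀ v, π (g' v) = g v) :
    classMinSum P' Q' f' g' ≤ classMinSum P Q f g := by
  unfold classMinSum
  set S' := (univ.filter P').image f' ∪ (univ.filter Q').image g'
  have hmaps : ∀ s' ∈ S', π s' ∈ (univ.filter P).image f ∪ (univ.filter Q).image g := by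
    simp only [S', mem_union, mem_image, mem_filter, mem_univ, true_and]
    rintro _ (⟨u, hu, rfl⟩ | ⟨v, hv, rfl⟩)
    · exact Or.inl ⟨u, hP u hu, (hf u).symm⟩
    · exact Or.inr ⟨v, hQ v hv, (hg v).symm⟩
  rw [← sum_fiberwise_of_maps_to hmaps]
  gcongr with s
  calc _ ≤ min (∑ s' ∈ S' with π s' = s, (univ.filter fun u => P' u ∧ f' u = s').card)
        (∑ s' ∈ S' with π s' = s, (univ.filter fun v => Q' v ∧ g' v = s').card) :=
        le_min (sum_le_sum fun _ _ => min_le_left _ _) (sum_le_sum fun _ _ => min_le_right _ _)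
    _ ≤ _ := min_le_min (sum_card_fiber_le_card_fiber π hP hf S' s)
        (sum_card_fiber_le_card_fiber π hQ hg S' s)

end ClassMinSum

section Signature

variable {ι : Type*} [DecidableEq ι]

def restrictSig (M : Finset ι) (s : ℕ × (ι → Bool)) : ℕ × (ι → Bool) :=
  (s.1, fun p => s.2 p && decide (p ∈ M))

def extendSig (q : ι) (c : Bool) (s : ℕ × (ι → Bool)) : ℕ × (ι → Bool) :=
  (s.1, Function.update s.2 q c)

lemma extendSig_mem_pair [Fintype ι] (q : ι) (c : Bool) (s : ℕ × (ι → Bool)) :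
    extendSig q c s ∈ ({extendSig q true s, extendSig q false s} : Finset _) := by
  cases c <;> simp

end Signature

section McSplit

variable {α β : Type} [DecidableEq α] [DecidableEq β]

lemma restrictSig_sigA (G₁ : SimpleGraph α) [DecidableRel G₁.Adj] (L₁ : α → ℕ)
    {M M' : Finset (α × β)} (h : M ⊆ M') (u : α) :
    restrictSig M (sigA G₁ L₁ M' u) = sigA G₁ L₁ M u := by
  simp only [restrictSig, sigA, Prod.mk.injEq, true_and]
  funext p
  by_cases hp : p ∈ M
  · simp [hp, h hp]
  · simp [hp]

lemma restrictSig_sigB (G₂ : SimpleGraph β) [DecidableRel G₂.Adj] (L₂ : β → ℕ)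
    {M M' : Finset (α × β)} (h : M ⊆ M') (v : β) :
    restrictSig M (sigB G₂ L₂ M' v) = sigB G₂ L₂ M v := by
  simp only [restrictSig, sigB, Prod.mk.injEq, true_and]
  funext p
  by_cases hp : p ∈ M
  · simp [hp, h hp]
  · simp [hp]

lemma sigA_insert (G₁ : SimpleGraph α) [DecidableRel G₁.Adj] (L₁ : α → ℕ)
    (M : Finset (α × β)) (q : α × β) (u : α) :
    sigA G₁ L₁ (insert q M) u = extendSig q (decide (G₁.Adj u q.1)) (sigA G₁ L₁ M u) := by
  simp only [extendSig, sigA, Prod.mk.injEq, true_and]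
  funext p
  by_cases hp : p = q <;> simp [hp]

lemma sigB_insert (G₂ : SimpleGraph β) [DecidableRel G₂.Adj] (L₂ : β → ℕ)
    (M : Finset (α × β)) (q : α × β) (v : β) :
    sigB G₂ L₂ (insert q M) v = extendSig q (decide (G₂.Adj v q.2)) (sigB G₂ L₂ M v) := by
  simp only [extendSig, sigB, Prod.mk.injEq, true_and]
  funext p
  by_cases hp : p = q <;> simp [hp]

lemma mcsplitBound_eq_card_add_classMinSum [Fintype α] [Fintype β]
    (G₁ : SimpleGraph α) (G₂ : SimpleGraph β) [DecidableRel G₁.Adj] [DecidableRel G₂.Adj]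
    (L₁ : α → ℕ) (L₂ : β → ℕ) (M : Finset (α × β)) :
    mcsplitBound G₁ G₂ L₁ L₂ M = M.card + classMinSum (fun u => ∀ p ∈ M, p.1 ≠ u)
      (fun v => ∀ p ∈ M, p.2 ≠ v) (sigA G₁ L₁ M) (sigB G₂ L₂ M) :=
  rfl

lemma mcsplitBound_add_card_le_of_subset [Fintype α] [Fintype β]
    (G₁ : SimpleGraph α) (G₂ : SimpleGraph β) [DecidableRel G₁.Adj] [DecidableRel G₂.Adj]
    (L₁ : α → ℕ) (L₂ : β → ℕ) {M M' : Finset (α × β)} (h : M ⊆ M') :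
    mcsplitBound G₁ G₂ L₁ L₂ M' + M.card ≤ mcsplitBound G₁ G₂ L₁ L₂ M + M'.card := by
  have hsum := classMinSum_le_of_factor (restrictSig M)
    (P := fun u => ∀ p ∈ M, p.1 ≠ u) (P' := fun u => ∀ p ∈ M', p.1 ≠ u)
    (Q := fun v => ∀ p ∈ M, p.2 ≠ v) (Q' := fun v => ∀ p ∈ M', p.2 ≠ v)
    (fun _ hu p hp => hu p (h hp)) (fun _ hv p hp => hv p (h hp))
    (restrictSig_sigA G₁ L₁ h) (restrictSig_sigB G₂ L₂ h)
  rw [mcsplitBound_eq_card_add_classMinSum, mcsplitBound_eq_card_add_classMinSum]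
  omega

end McSplit

theorem mcsplit_bound_refinement_general {α β : Type} [Fintype α] [Fintype β]
    [DecidableEq α] [DecidableEq β]
    (G₁ : SimpleGraph α) (G₂ : SimpleGraph β)
    [DecidableRel G₁.Adj] [DecidableRel G₂.Adj]
    (L₁ : α → ℕ) (L₂ : β → ℕ)
    (M : Finset (α × β))
    (a : α) (b : β) :
    (∀ s : ℕ × (α × β → Bool),
      (((Finset.univ.filter fun u : α =>
            (∀ p ∈ insert (a, b) M, p.1 ≠ u) ∧ sigA G₁ L₁ M u = s).image
          (sigA G₁ L₁ (insert (a, b) M)))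
        ∪ ((Finset.univ.filter fun v : β =>
            (∀ p ∈ insert (a, b) M, p.2 ≠ v) ∧ sigB G₂ L₂ M v = s).image
          (sigB G₂ L₂ (insert (a, b) M)))).card ≤ 2) ∧
    mcsplitBound G₁ G₂ L₁ L₂ (insert (a, b) M) ≤ 1 + mcsplitBound G₁ G₂ L₁ L₂ M := by
  constructor
  · intro s
    refine (card_le_card (t := {extendSig (a, b) true s, extendSig (a, b) false s})
      fun x hx => ?_).trans card_le_two
    simp only [mem_union, mem_image, mem_filter, mem_univ, true_and] at hx
    rcases hx with ⟨u, ⟨-, rfl⟩, rfl⟩ | ⟨v, ⟨-, rfl⟩, rfl⟩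
    · rw [sigA_insert]
      exact extendSig_mem_pair _ _ _
    · rw [sigB_insert]
      exact extendSig_mem_pair _ _ _
  · have hbound := mcsplitBound_add_card_le_of_subset G₁ G₂ L₁ L₂ (subset_insert (a, b) M)
    have hcard := card_insert_le (a, b) M
    omega

/-- McSplit-style bound refinement under label-class partitioning:
if the partial common induced subgraph mapping `M` is extended by one pair `(a, b)`
lying in the same label class (same label and identical adjacency pattern to the
matched pairs), then (i) each label class of `M` splits into at most two label classes
of `M ∪ {(a, b)}`, and (ii) the refined bound is at most `1 +` the original bound. -/
theorem mcsplit_bound_refinement {α β : Type} [Fintype α] [Fintype β]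
    [DecidableEq α] [DecidableEq β]
    (G₁ : SimpleGraph α) (G₂ : SimpleGraph β)
    [DecidableRel G₁.Adj] [DecidableRel G₂.Adj]
    (L₁ : α → ℕ) (L₂ : β → ℕ)
    (M : Finset (α × β)) (hM : IsCISMap G₁ G₂ L₁ L₂ M)
    (a : α) (b : β) (ha : ∀ p ∈ M, p.1 ≠ a) (hb : ∀ p ∈ M, p.2 ≠ b)
    (hlabel : L₁ a = L₂ b)
    (hclass : ∀ p ∈ M, (G₁.Adj a p.1 ↔ G₂.Adj b p.2)) :
    (∀ s : ℕ × (α × β → Bool),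
      (((Finset.univ.filter fun u : α =>
            (∀ p ∈ insert (a, b) M, p.1 ≠ u) ∧ sigA G₁ L₁ M u = s).image
          (sigA G₁ L₁ (insert (a, b) M)))
        ∪ ((Finset.univ.filter fun v : β =>
            (∀ p ∈ insert (a, b) M, p.2 ≠ v) ∧ sigB G₂ L₂ M v = s).image
          (sigB G₂ L₂ (insert (a, b) M)))).card ≤ 2) ∧
    mcsplitBound G₁ G₂ L₁ L₂ (insert (a, b) M) ≤ 1 + mcsplitBound G₁ G₂ L₁ L₂ M :=
  mcsplit_bound_refinement_general G₁ G₂ L₁ L₂ M a b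
end
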